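/- For every u ∈ [−1/10, 1/10] one has 1 − √(1 − (√2/2 + u)²) − u ≤ 31/100, and 31/100 < 11/10 − √2/2. Consequently, the decision rule t(u) = arccos(√2/2 + u) (which maps [−1/10, 1/10] into [0, π/2] since √2/2 + u ∈ [0,1]) satisfies f₁(t(u),u) = 1 − √2/2 < 11/10 − √2/2 and f₂(t(u),u) ≤ 31/100 < 11/10 − √2/2 for all u ∈ [−1/10, 1/10]; its worst-case objective vector therefore strictly dominates, in both components, the component-wise robust worst-case vector (11/10 − √2/2, 11/10 − √2/2) of the constant choice t = π/4. Adjustability of the wait-and-see variable t thus strictly improves on the component-wise robust solution in the toy example. -/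
import Mathlib


open Real

lemma sqrt2_sq : (Real.sqrt 2) ^ 2 = 2 := Real.sq_sqrt (by norm_num)

lemma sqrt2_lb : (1.414 : ℝ) ≤ Real.sqrt 2 := by
  rw [show (1.414 : ℝ) = Real.sqrt (1.414 ^ 2) by
    rw [Real.sqrt_sq (by norm_num)]]
  exact Real.sqrt_le_sqrt (by norm_num)

lemma sqrt2_ub : Real.sqrt 2 ≤ 1.41422 := by
  rw [show (1.41422 : ℝ) = Real.sqrt (1.41422 ^ 2) by
    rw [Real.sqrt_sq (by norm_num)]]
  exact Real.sqrt_le_sqrt (by norm_num)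

lemma key (u : ℝ) (hu : u ∈ Set.Icc (-(1 / 10) : ℝ) (1 / 10)) :
    1 - Real.sqrt (1 - (Real.sqrt 2 / 2 + u) ^ 2) - u ≤ 31 / 100 := by
  obtain ⟨h1, h2⟩ := hu
  have hs := sqrt2_sq
  have hl := sqrt2_lb
  have hub := sqrt2_ub
  have hge : (69 / 100 - u) ≤ Real.sqrt (1 - (Real.sqrt 2 / 2 + u) ^ 2) := by
    have : (69 / 100 - u) ^ 2 ≤ 1 - (Real.sqrt 2 / 2 + u) ^ 2 := by
      nlinarith [sq_nonneg (u - 1/10), sq_nonneg (u + 1/10), sq_nonneg u]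
    nlinarith [Real.sq_sqrt (show (0:ℝ) ≤ 1 - (Real.sqrt 2 / 2 + u) ^ 2 by nlinarith),
      Real.sqrt_nonneg (1 - (Real.sqrt 2 / 2 + u) ^ 2)]
  linarith

/-- The decision rule `t(u) = arccos(√2/2 + u)` strictly dominates, in both
components and for every scenario `u ∈ [-1/10, 1/10]`, the component-wise
robust worst-case vector `(11/10 - √2/2, 11/10 - √2/2)` of the constant
choice `t = π/4`: adjustability strictly improves on component-wise
robustness in the toy example. -/
theorem toy_adjustability_strictly_improves :
    (∀ u ∈ Set.Icc (-(1 / 10) : ℝ) (1 / 10),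
        1 - Real.sqrt (1 - (Real.sqrt 2 / 2 + u) ^ 2) - u ≤ 31 / 100) ∧
      (31 / 100 : ℝ) < 11 / 10 - Real.sqrt 2 / 2 ∧
      ∀ u ∈ Set.Icc (-(1 / 10) : ℝ) (1 / 10),
        (Real.sqrt 2 / 2 + u ∈ Set.Icc (0 : ℝ) 1) ∧
        Real.arccos (Real.sqrt 2 / 2 + u) ∈ Set.Icc (0 : ℝ) (π / 2) ∧
        (1 - cos (Real.arccos (Real.sqrt 2 / 2 + u)) + u
            = 1 - Real.sqrt 2 / 2) ∧
        (1 - cos (Real.arccos (Real.sqrt 2 / 2 + u)) + u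
            < 11 / 10 - Real.sqrt 2 / 2) ∧
        (1 - sin (Real.arccos (Real.sqrt 2 / 2 + u)) - u ≤ 31 / 100) ∧
        (1 - sin (Real.arccos (Real.sqrt 2 / 2 + u)) - u
            < 11 / 10 - Real.sqrt 2 / 2) := by
  have hl := sqrt2_lb
  have hub := sqrt2_ub
  refine ⟨key, by nlinarith, ?_⟩
  intro u hu
  obtain ⟨h1, h2⟩ := hu
  have hmem : Real.sqrt 2 / 2 + u ∈ Set.Icc (0 : ℝ) 1 :=
    ⟨by nlinarith, by nlinarith⟩
  have hcos : cos (Real.arccos (Real.sqrt 2 / 2 + u)) = Real.sqrt 2 / 2 + u :=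
    Real.cos_arccos (by nlinarith) (by nlinarith)
  have hsin : sin (Real.arccos (Real.sqrt 2 / 2 + u))
      = Real.sqrt (1 - (Real.sqrt 2 / 2 + u) ^ 2) := by
    rw [Real.sin_arccos]
  refine ⟨hmem, ⟨Real.arccos_nonneg _, ?_⟩, ?_, ?_, ?_, ?_⟩
  · exact Real.arccos_le_pi_div_two.2 hmem.1
  · rw [hcos]; ring
  · rw [hcos]; nlinarith
  · rw [hsin]; exact key u ⟨h1, h2⟩
  · rw [hsin]
    have := key u ⟨h1, h2⟩
    nlinarith
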